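/- Let F = (A, C) be a finite AAF and l a labelling of F. Then (F,l) ∈ S_3 ∩ S_4 if and only if (F,l) ∈ S_2, i.e., there exist CC-wise total orders making l complete under both Reduction 3 and Reduction 4 if and only if there exists a CC-wise total order making l complete under Reduction 2. -/
import Mathlib


/-- The three labels of a labelling: `inn` (in), `out`, `undec`. -/
inductive Label where
  | inn : Label
  | out : Label
  | undec : Label
deriving DecidableEq

/-- Undirected connectivity: reachability in the symmetric closure of `C`.
`Conn C a b` holds iff `a` and `b` are joined by an undirected path, i.e.
they lie in the same connected component of `(A, C)`. -/
def Conn {A : Type*} (C : A → A → Prop) : A → A → Prop :=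
  Relation.ReflTransGen (fun x y => C x y ∨ C y x)

/-- A CC-wise total order on the AAF `(A, C)`: a reflexive transitive relation
whose restriction to each connected component is total. -/
structure CCOrder {A : Type*} (C : A → A → Prop) where
  le : A → A → Prop
  refl : ∀ a, le a a
  trans : ∀ a b c, le a b → le b c → le a c
  total : ∀ a b, Conn C a b → le a b ∨ le b a

/-- Strict part: `a ≺ b` iff `a ≼ b` and not `b ≼ a`. -/
def CCOrder.lt {A : Type*} {C : A → A → Prop} (r : CCOrder C) (a b : A) : Prop :=
  r.le a b ∧ ¬ r.le b a

/-- Reduction 1: `C₁ = {(a,b) | ((a,b) ∈ C ∧ b ≼ a) ∨ ((b,a) ∈ C ∧ b ≺ a)}`. -/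
def red1 {A : Type*} (C : A → A → Prop) (r : CCOrder C) (a b : A) : Prop :=
  (C a b ∧ r.le b a) ∨ (C b a ∧ r.lt b a)

/-- Reduction 2: `C₂ = {(a,b) ∈ C | b ≼ a ∨ (b,a) ∉ C}`. -/
def red2 {A : Type*} (C : A → A → Prop) (r : CCOrder C) (a b : A) : Prop :=
  C a b ∧ (r.le b a ∨ ¬ C b a)

/-- Reduction 3: `C₁ ∪ C₂`. -/
def red3 {A : Type*} (C : A → A → Prop) (r : CCOrder C) (a b : A) : Prop :=
  red1 C r a b ∨ red2 C r a b

/-- Reduction 4: `C₄ = {(a,b) ∈ C | b ≼ a}`. -/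
def red4 {A : Type*} (C : A → A → Prop) (r : CCOrder C) (a b : A) : Prop :=
  C a b ∧ r.le b a

/-- `l` is a complete labelling of the attack relation `C`:
`l a = in` iff all attackers of `a` are `out`, and
`l a = out` iff some attacker of `a` is `in` (and `undec` otherwise,
which is automatic for a three-valued labelling). -/
def CompleteLabelling {A : Type*} (C : A → A → Prop) (l : A → Label) : Prop :=
  ∀ a, (l a = Label.inn ↔ ∀ b, C b a → l b = Label.out) ∧
       (l a = Label.out ↔ ∃ b, C b a ∧ l b = Label.inn)

/-- `(a,b) ∈ F₁`: an attack of `C` assigned value 1 by `f`. -/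
def inF1 {A : Type*} (C : A → A → Prop) (f : A → A → Bool) (a b : A) : Prop :=
  C a b ∧ f a b = true

/-- `(a,b) ∈ F₀`: an attack of `C` assigned value 0 by `f`. -/
def inF0 {A : Type*} (C : A → A → Prop) (f : A → A → Bool) (a b : A) : Prop :=
  C a b ∧ f a b = false

/-- The relation `conv(F₀) ∪ F₁`. -/
def Drel {A : Type*} (C : A → A → Prop) (f : A → A → Bool) (a b : A) : Prop :=
  inF0 C f b a ∨ inF1 C f a b

/-- The relation `F₁ \ conv(F₀)`. -/
def Erel {A : Type*} (C : A → A → Prop) (f : A → A → Bool) (a b : A) : Prop :=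
  inF1 C f a b ∧ ¬ inF0 C f b a

/-- `f` is a preference function over `(A, C)`: every directed cycle of
`conv(F₀) ∪ F₁` is entirely contained in `F₁ \ conv(F₀)`.  Equivalently
(edge-wise): every edge of `conv(F₀) ∪ F₁` lying on a directed cycle
(i.e. admitting a return path) belongs to `F₁ \ conv(F₀)`. -/
def IsPrefFun {A : Type*} (C : A → A → Prop) (f : A → A → Bool) : Prop :=
  ∀ a b, Drel C f a b → Relation.ReflTransGen (Drel C f) b a → Erel C f a b

/-- A ranking function for `(F, l)` (assuming no argument is labelled `out`):
(1) every attack touching an `in`-labelled argument strictly decreases rank, and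
(2) every `undec` argument has an `undec` attacker of rank at most its own. -/
def IsRanking {A : Type*} (C : A → A → Prop) (l : A → Label) (ψ : A → ℤ) : Prop :=
  (∀ u v, C u v → (l u = Label.inn ∨ l v = Label.inn) → ψ u > ψ v) ∧
  (∀ u, l u = Label.undec → ∃ v, C v u ∧ l v = Label.undec ∧ ψ v ≤ ψ u)
section Stmt18Aux

variable {A : Type*} {C : A → A → Prop} {l : A → Label}

/-- Label-level characterization of membership in S₂ (and of S₃ ∩ S₄). -/
def GoodLab (C : A → A → Prop) (l : A → Label) : Prop :=
  (∀ x y, C x y → l x ≠ Label.out → l y ≠ Label.out →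
      l x = Label.undec ∧ l y = Label.undec) ∧
  (∀ a, l a = Label.out → ∃ b, C b a ∧ l b = Label.inn) ∧
  (∀ a, l a = Label.undec → ∃ b, C b a ∧ l b = Label.undec)

/-- The order that places all `out` arguments strictly below everything else. -/
def triv (C : A → A → Prop) (l : A → Label) : CCOrder C where
  le a b := l a = Label.out ∨ l b ≠ Label.out
  refl a := by
    by_cases h : l a = Label.out
    · exact Or.inl h
    · exact Or.inr h
  trans a b c hab hbc := by
    rcases hab with h | h
    · exact Or.inl h
    · rcases hbc with h' | h'
      · exact absurd h' h
      · exact Or.inr h'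
  total a b _ := by
    by_cases h : l a = Label.out
    · exact Or.inl (Or.inl h)
    · exact Or.inr (Or.inr h)

lemma triv_le {a b : A} :
    (triv C l).le a b ↔ (l a = Label.out ∨ l b ≠ Label.out) := Iff.rfl

lemma triv_lt {a b : A} :
    (triv C l).lt a b ↔ (l a = Label.out ∧ l b ≠ Label.out) := by
  simp only [CCOrder.lt, triv_le]
  tauto

/-- Sufficiency: `GoodLab` implies `l` is complete for any relation `R`
satisfying the three interface conditions. -/
lemma needGen (hg : GoodLab C l) {R : A → A → Prop}
    (hi : ∀ b a, R b a → l a ≠ Label.out → C b a)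
    (hii : ∀ b a, C b a → l a = Label.out → l b = Label.inn → R b a)
    (hiii : ∀ b a, C b a → l a = Label.undec → l b = Label.undec → R b a) :
    CompleteLabelling R l := by
  obtain ⟨h1, h2, h3⟩ := hg
  intro a
  rcases ha : l a with _ | _ | _
  · -- l a = inn
    have hP : ∀ b, R b a → l b = Label.out := by
      intro b hb
      by_contra hnb
      have hc := hi b a hb (by simp [ha])
      have := (h1 b a hc hnb (by simp [ha])).2
      simp [ha] at this
    refine ⟨iff_of_true rfl hP, iff_of_false (by simp [ha]) ?_⟩
    rintro ⟨b, hb, hbin⟩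
    have := hP b hb
    simp [hbin] at this
  · -- l a = out
    obtain ⟨b, hba, hbin⟩ := h2 a ha
    have hR := hii b a hba ha hbin
    refine ⟨iff_of_false (by simp [ha]) ?_, iff_of_true rfl ⟨b, hR, hbin⟩⟩
    intro hP
    have := hP b hR
    simp [hbin] at this
  · -- l a = undec
    obtain ⟨b, hba, hbu⟩ := h3 a ha
    have hR := hiii b a hba ha hbu
    refine ⟨iff_of_false (by simp [ha]) ?_, iff_of_false (by simp [ha]) ?_⟩
    · intro hP
      have := hP b hR
      simp [hbu] at this
    · rintro ⟨c, hc, hcin⟩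
      have hca := hi c a hc (by simp [ha])
      have := (h1 c a hca (by simp [hcin]) (by simp [ha])).1
      simp [hcin] at this

/-- For any order, at least one direction of any attack survives Reduction 2. -/
lemma red2_total (r : CCOrder C) {x y : A} (hxy : C x y) :
    red2 C r x y ∨ red2 C r y x := by
  by_cases hyx : C y x
  · rcases r.total y x (Relation.ReflTransGen.single (Or.inl hyx)) with h | h
    · exact Or.inl ⟨hxy, Or.inl h⟩
    · exact Or.inr ⟨hyx, Or.inl h⟩
  · exact Or.inl ⟨hxy, Or.inr hyx⟩

lemma presentBoth {R : A → A → Prop} (h : CompleteLabelling R l)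
    {u v : A} (huv : R u v) (hu : l u ≠ Label.out) (hv : l v ≠ Label.out) :
    l u = Label.undec ∧ l v = Label.undec := by
  rcases hv' : l v with _ | _ | _
  · exact absurd ((h v).1.mp hv' u huv) hu
  · exact absurd hv' hv
  · rcases hu' : l u with _ | _ | _
    · have := (h v).2.mpr ⟨u, huv, hu'⟩
      rw [hv'] at this
      exact absurd this (by simp)
    · exact absurd hu' hu
    · exact ⟨rfl, rfl⟩

lemma noBad {R : A → A → Prop} (hpres : ∀ x y, C x y → R x y ∨ R y x)
    (h : CompleteLabelling R l) :
    ∀ x y, C x y → l x ≠ Label.out → l y ≠ Label.out →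
      l x = Label.undec ∧ l y = Label.undec := by
  intro x y hxy hx hy
  rcases hpres x y hxy with hR | hR
  · exact presentBoth h hR hx hy
  · exact (presentBoth h hR hy hx).symm

lemma exOut {R : A → A → Prop} (hsub : ∀ u v, R u v → C u v)
    (h : CompleteLabelling R l) :
    (∀ a, l a = Label.out → ∃ b, C b a ∧ l b = Label.inn) ∧
    (∀ a, l a = Label.undec → ∃ b, C b a ∧ l b = Label.undec) := by
  constructor
  · intro a ha
    obtain ⟨b, hb, hbin⟩ := (h a).2.mp ha
    exact ⟨b, hsub b a hb, hbin⟩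
  · intro a ha
    have hnP : ¬ ∀ b, R b a → l b = Label.out := by
      intro hp
      have := (h a).1.mpr hp
      rw [ha] at this
      exact absurd this (by simp)
    push_neg at hnP
    obtain ⟨b, hb, hbo⟩ := hnP
    have hbin : l b ≠ Label.inn := by
      intro hbin
      have := (h a).2.mpr ⟨b, hb, hbin⟩
      rw [ha] at this
      exact absurd this (by simp)
    refine ⟨b, hsub b a hb, ?_⟩
    rcases hbl : l b with _ | _ | _
    · exact absurd hbl hbin
    · exact absurd hbl hbo
    · rfl

lemma good_red2 (hg : GoodLab C l) : CompleteLabelling (red2 C (triv C l)) l := by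
  refine needGen hg ?_ ?_ ?_
  · exact fun b a h _ => h.1
  · exact fun b a hba ha _ => ⟨hba, Or.inl (Or.inl ha)⟩
  · exact fun b a hba _ hbu => ⟨hba, Or.inl (Or.inr (by simp [hbu]))⟩

lemma good_red4 (hg : GoodLab C l) : CompleteLabelling (red4 C (triv C l)) l := by
  refine needGen hg ?_ ?_ ?_
  · exact fun b a h _ => h.1
  · exact fun b a hba ha _ => ⟨hba, Or.inl ha⟩
  · exact fun b a hba _ hbu => ⟨hba, Or.inr (by simp [hbu])⟩

lemma good_red3 (hg : GoodLab C l) : CompleteLabelling (red3 C (triv C l)) l := by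
  refine needGen hg ?_ ?_ ?_
  · rintro b a (h | h) hna
    · rcases h with ⟨hba, _⟩ | ⟨_, hlt⟩
      · exact hba
      · exact absurd (triv_lt.mp hlt).1 hna
    · exact h.1
  · exact fun b a hba ha _ => Or.inr ⟨hba, Or.inl (Or.inl ha)⟩
  · exact fun b a hba _ hbu => Or.inr ⟨hba, Or.inl (Or.inr (by simp [hbu]))⟩

end Stmt18Aux

/-- S₃ ∩ S₄ = S₂. -/
theorem stmt18 {A : Type*} [Fintype A] (C : A → A → Prop) (l : A → Label) :
    ((∃ r : CCOrder C, CompleteLabelling (red3 C r) l) ∧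
     (∃ r : CCOrder C, CompleteLabelling (red4 C r) l)) ↔
      (∃ r : CCOrder C, CompleteLabelling (red2 C r) l) := by
  constructor
  · rintro ⟨⟨r3, h3⟩, ⟨r4, h4⟩⟩
    have h1 := noBad (fun x y hxy => (red2_total r3 hxy).imp Or.inr Or.inr) h3
    have h23 := exOut (fun u v h => h.1) h4
    exact ⟨triv C l, good_red2 ⟨h1, h23.1, h23.2⟩⟩
  · rintro ⟨r, h⟩
    have h1 := noBad (fun x y hxy => red2_total r hxy) h
    have h23 := exOut (fun u v (h' : red2 C r u v) => h'.1) h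
    have hg : GoodLab C l := ⟨h1, h23.1, h23.2⟩
    exact ⟨⟨triv C l, good_red3 hg⟩, ⟨triv C l, good_red4 hg⟩⟩
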